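/- arXiv:2507.19169 — 2 statements merged into one kernel-verified Lean document; each statement's English description precedes it below -/
import Mathlib

section
/- Suppose the predictive distributions satisfy the recursion α_{n+1}(·) = q_n(X_1,…,X_n) α_n(·) + (1 − q_n(X_1,…,X_n)) K_n(X_{n+1}, ·) for each n ≥ 0, where q_n : S^n → (0,1) is Borel and K_n is a kernel on (S,𝓑). If Σ_n sup_{x ∈ S^n} (1 − q_n(x)) < ∞, then for each bounded Borel function f : S → ℝ one has Σ_n E| E[ f(X_{n+2}) − f(X_{n+1}) | 𝓕_n ] | < ∞, and hence α_n(f) converges almost surely. -/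
open MeasureTheory ProbabilityTheory Filter Topology
open scoped ENNReal NNReal

variable {Ω S : Type*}

/-- `Filt X n` is the σ-field `𝓕_n = σ(X_1,…,X_n)` generated by the first `n` variables.
Indexing convention: `X i` here denotes the paper's `X_{i+1}`, so that `Filt X 0 = ⊥`. -/
def Filt [MeasurableSpace S] (X : ℕ → Ω → S) (n : ℕ) : MeasurableSpace Ω :=
  ⨆ i ∈ Finset.range n, MeasurableSpace.comap (X i) inferInstance

/-- The predictive mean `α_n(f) = E[f(X_{n+1}) ∣ 𝓕_n]` (here the paper's `X_{n+1}` is `X n`). -/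
noncomputable def predMean [MeasurableSpace Ω] [MeasurableSpace S]
    (P : Measure Ω) (X : ℕ → Ω → S) (f : S → ℝ) (n : ℕ) : Ω → ℝ :=
  P[(fun ω => f (X n ω)) | Filt X n]

/-!
The recursion gives `α_{n+1}(f) - α_n(f) = (1 - q_n) (K_n(X_{n+1}, f) - α_n(f))`, so the increments
of `α_n(f)` are bounded by `2 sup|f| · sup_x (1 - q_n(x))`, which is summable: hence `α_n(f)` is
Cauchy almost surely. By the tower property `E[f(X_{n+2}) - f(X_{n+1}) | 𝓕_n]` is the conditional
expectation of `α_{n+1}(f) - α_n(f)`, and conditional expectation contracts the `L¹` norm, so the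
same bound makes `Σ_n E|E[f(X_{n+2}) - f(X_{n+1}) | 𝓕_n]|` finite.
-/

lemma abs_mul_add_one_sub_mul_sub_le {a b r C : ℝ} (ha : |a| ≤ C) (hb : |b| ≤ C) (hr : r ≤ 1) :
    |r * a + (1 - r) * b - a| ≤ 2 * C * (1 - r) := by
  have hab : |b - a| ≤ 2 * C := by
    calc |b - a| ≤ |b| + |a| := abs_sub _ _
      _ ≤ 2 * C := by linarith
  calc |r * a + (1 - r) * b - a| = (1 - r) * |b - a| := by
        rw [show r * a + (1 - r) * b - a = (1 - r) * (b - a) by ring, abs_mul,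
          abs_of_nonneg (sub_nonneg.2 hr)]
    _ ≤ (1 - r) * (2 * C) := mul_le_mul_of_nonneg_left hab (sub_nonneg.2 hr)
    _ = 2 * C * (1 - r) := mul_comm _ _

section ConditionalExpectation

variable {m m' m0 : MeasurableSpace Ω} {μ : Measure Ω}

lemma integral_abs_condExp_sub_le [IsFiniteMeasure μ] (hm : m ≤ m') (hm' : m' ≤ m0)
    {g g' : Ω → ℝ} (hg : Integrable g μ) (hg' : Integrable g' μ) :
    ∫ ω, |μ[g' - g | m] ω| ∂μ ≤ ∫ ω, |μ[g' | m'] ω - μ[g | m] ω| ∂μ := by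
  have htower : μ[g' - g | m] =ᵐ[μ] μ[μ[g' | m'] - μ[g | m] | m] :=
    calc μ[g' - g | m] =ᵐ[μ] μ[g' | m] - μ[g | m] := condExp_sub hg' hg m
      _ =ᵐ[μ] μ[μ[g' | m'] | m] - μ[μ[g | m] | m] :=
        (condExp_condExp_of_le hm hm').symm.sub (condExp_condExp_of_le le_rfl (hm.trans hm')).symm
      _ =ᵐ[μ] μ[μ[g' | m'] - μ[g | m] | m] :=
        (condExp_sub integrable_condExp integrable_condExp m).symm
  calc ∫ ω, |μ[g' - g | m] ω| ∂μ = ∫ ω, |μ[μ[g' | m'] - μ[g | m] | m] ω| ∂μ :=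
        integral_congr_ae (htower.mono fun _ h => congrArg abs h)
    _ ≤ ∫ ω, |μ[g' | m'] ω - μ[g | m] ω| ∂μ := integral_abs_condExp_le _

lemma integral_abs_le_of_ae_abs_le [IsProbabilityMeasure μ] {g : Ω → ℝ} {c : ℝ}
    (hg : ∀ᵐ ω ∂μ, |g ω| ≤ c) : ∫ ω, |g ω| ∂μ ≤ c := by
  calc ∫ ω, |g ω| ∂μ ≤ ∫ _, c ∂μ :=
        integral_mono_of_nonneg (ae_of_all _ fun _ => abs_nonneg _) (integrable_const c) hg
    _ = c := by simp

lemma ae_exists_tendsto_of_abs_sub_le {g : ℕ → Ω → ℝ} {c : ℕ → ℝ}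
    (hg : ∀ n, ∀ᵐ ω ∂μ, |g (n + 1) ω - g n ω| ≤ c n) (hc : Summable c) :
    ∀ᵐ ω ∂μ, ∃ L, Tendsto (fun n => g n ω) atTop (𝓝 L) := by
  filter_upwards [ae_all_iff.2 hg] with ω hω
  refine cauchySeq_tendsto_of_complete (cauchySeq_of_dist_le_of_summable c (fun n => ?_) hc)
  rw [Real.dist_eq, abs_sub_comm]
  exact hω n

end ConditionalExpectation

section Predictive

variable [MeasurableSpace S] {X : ℕ → Ω → S}

lemma Filt_mono : Monotone (Filt X) := fun _ _ hmn =>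
  biSup_mono fun _ hi => Finset.mem_range.2 ((Finset.mem_range.1 hi).trans_le hmn)

variable [MeasurableSpace Ω]

lemma Filt_le (hX : ∀ i, Measurable (X i)) (n : ℕ) : Filt X n ≤ ‹MeasurableSpace Ω› :=
  iSup₂_le fun i _ => (hX i).comap_le

variable {P : Measure Ω} {f : S → ℝ} {C : ℝ}

lemma ae_abs_predMean_le (hfC : ∀ x, |f x| ≤ C) (n : ℕ) : ∀ᵐ ω ∂P, |predMean P X f n ω| ≤ C :=
  ae_bdd_abs_condExp_of_ae_bdd_abs (ae_of_all _ fun ω => hfC (X n ω))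

lemma ae_abs_predMean_succ_sub_le (hfC : ∀ x, |f x| ≤ C) {n : ℕ}
    {q : (Fin n → S) → ℝ} (hq : ∀ x, q x ≤ 1) {K : S → Measure S}
    (hK : ∀ x, IsProbabilityMeasure (K x))
    (hrec : predMean P X f (n + 1) =ᵐ[P] fun ω => q (fun i => X i.val ω) * predMean P X f n ω +
      (1 - q (fun i => X i.val ω)) * ∫ x, f x ∂(K (X n ω))) :
    ∀ᵐ ω ∂P, |predMean P X f (n + 1) ω - predMean P X f n ω| ≤
      2 * C * (1 - q (fun i => X i.val ω)) := by
  filter_upwards [hrec, ae_abs_predMean_le hfC n] with ω hω hα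
  have hKf : |∫ x, f x ∂(K (X n ω))| ≤ C := by
    simpa using norm_integral_le_of_norm_le_const (μ := K (X n ω)) (f := f)
      (ae_of_all _ fun x => by simpa using hfC x)
  rw [hω]
  exact abs_mul_add_one_sub_mul_sub_le hα hKf (hq _)

variable [IsProbabilityMeasure P]

lemma integral_norm_condExp_increment_le (hX : ∀ i, Measurable (X i)) (hf : Measurable f)
    (hfC : ∀ x, |f x| ≤ C) (n : ℕ) :
    ∫ ω, ‖P[(fun ω => f (X (n + 1) ω) - f (X n ω)) | Filt X n] ω‖ ∂P ≤
      ∫ ω, |predMean P X f (n + 1) ω - predMean P X f n ω| ∂P := by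
  have hint : ∀ k, Integrable (fun ω => f (X k ω)) P := fun k =>
    .of_bound (hf.comp (hX k)).aestronglyMeasurable C (ae_of_all _ fun ω => hfC (X k ω))
  simp_rw [Real.norm_eq_abs]
  exact integral_abs_condExp_sub_le (Filt_mono n.le_succ) (Filt_le hX (n + 1)) (hint n)
    (hint (n + 1))

end Predictive

theorem stmt13_general [MeasurableSpace Ω]
    [MeasurableSpace S]
    (P : Measure Ω) [IsProbabilityMeasure P]
    (X : ℕ → Ω → S) (hX : ∀ i, Measurable (X i))
    (q : (n : ℕ) → (Fin n → S) → ℝ)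
    (hq01 : ∀ n x, q n x ∈ Set.Ioo (0 : ℝ) 1)
    (K : ℕ → S → Measure S) (hKp : ∀ n x, IsProbabilityMeasure (K n x))
    (hrec : ∀ f : S → ℝ, Measurable f → (∃ C, ∀ x, |f x| ≤ C) → ∀ n,
      predMean P X f (n + 1) =ᵐ[P]
        fun ω => q n (fun i => X i.val ω) * predMean P X f n ω +
          (1 - q n (fun i => X i.val ω)) * ∫ x, f x ∂(K n (X n ω)))
    (hsum : Summable fun n => ⨆ x : Fin n → S, (1 - q n x)) :
    ∀ f : S → ℝ, Measurable f → (∃ C, ∀ x, |f x| ≤ C) →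
      (Summable fun n =>
        ∫ ω, ‖(P[(fun ω => f (X (n + 1) ω) - f (X n ω)) | Filt X n]) ω‖ ∂P) ∧
      ∀ᵐ ω ∂P, ∃ L : ℝ, Tendsto (fun n => predMean P X f n ω) atTop (𝓝 L) := by
  intro f hf ⟨C₀, hC₀⟩
  set C := max C₀ 0
  have hC : 0 ≤ C := le_max_right _ _
  have hfC : ∀ x, |f x| ≤ C := fun x => (hC₀ x).trans (le_max_left _ _)
  have hqsup : ∀ n x, 1 - q n x ≤ ⨆ y : Fin n → S, (1 - q n y) := fun n x =>
    le_ciSup (f := fun y => 1 - q n y)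
      ⟨1, by rintro _ ⟨y, rfl⟩; exact sub_le_self 1 (hq01 n y).1.le⟩ x
  have hinc : ∀ n, ∀ᵐ ω ∂P, |predMean P X f (n + 1) ω - predMean P X f n ω| ≤
      2 * C * ⨆ y : Fin n → S, (1 - q n y) := fun n =>
    (ae_abs_predMean_succ_sub_le hfC (fun x => (hq01 n x).2.le) (hKp n)
      (hrec f hf ⟨C, hfC⟩ n)).mono fun ω h =>
        h.trans (mul_le_mul_of_nonneg_left (hqsup n _) (mul_nonneg zero_le_two hC))
  have hsumC := hsum.mul_left (2 * C)
  refine ⟨hsumC.of_nonneg_of_le (fun n => integral_nonneg fun _ => norm_nonneg _) fun n => ?_,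
    ae_exists_tendsto_of_abs_sub_le hinc hsumC⟩
  exact (integral_norm_condExp_increment_le hX hf hfC n).trans
    (integral_abs_le_of_ae_abs_le (hinc n))

/-- recursive predictive distributions: if
`α_{n+1} = q_n(X_1,…,X_n) α_n + (1 − q_n(X_1,…,X_n)) K_n(X_{n+1},·)` with `q_n : Sⁿ → (0,1)`
Borel and `K_n` kernels, and `∑_n sup_x (1 − q_n(x)) < ∞`, then each `(α_n(f))` is a
quasi-martingale and hence `α_n(f)` converges a.s. for each bounded Borel `f`. -/
theorem stmt13 [MeasurableSpace Ω]
    [TopologicalSpace S] [PolishSpace S] [MeasurableSpace S] [BorelSpace S]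
    (P : Measure Ω) [IsProbabilityMeasure P]
    (X : ℕ → Ω → S) (hX : ∀ i, Measurable (X i))
    (q : (n : ℕ) → (Fin n → S) → ℝ) (hqmeas : ∀ n, Measurable (q n))
    (hq01 : ∀ n x, q n x ∈ Set.Ioo (0 : ℝ) 1)
    (K : ℕ → S → Measure S) (hKp : ∀ n x, IsProbabilityMeasure (K n x))
    (hKmeas : ∀ n (B : Set S), MeasurableSet B → Measurable fun x => K n x B)
    (hrec : ∀ f : S → ℝ, Measurable f → (∃ C, ∀ x, |f x| ≤ C) → ∀ n,
      predMean P X f (n + 1) =ᵐ[P]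
        fun ω => q n (fun i => X i.val ω) * predMean P X f n ω +
          (1 - q n (fun i => X i.val ω)) * ∫ x, f x ∂(K n (X n ω)))
    (hsum : Summable fun n => ⨆ x : Fin n → S, (1 - q n x)) :
    ∀ f : S → ℝ, Measurable f → (∃ C, ∀ x, |f x| ≤ C) →
      (Summable fun n =>
        ∫ ω, ‖(P[(fun ω => f (X (n + 1) ω) - f (X n ω)) | Filt X n]) ω‖ ∂P) ∧
      ∀ᵐ ω ∂P, ∃ L : ℝ, Tendsto (fun n => predMean P X f n ω) atTop (𝓝 L) :=
  stmt13_general P X hX q hq01 K hKp hrec hsum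
end

section
/- Suppose the predictive distributions are α_n(·) = (1/D_n) Σ_{i=0}^{n-1} d_i K_i(X_{i+1}, ·) for n ≥ 1, where d_n > 0 are constants, D_n = Σ_{i=0}^{n-1} d_i, and each K_i is a kernel on (S,𝓑). If Σ_n d_n / (d_0 + … + d_n) < ∞, then for each bounded Borel function f : S → ℝ one has Σ_n E| E[ f(X_{n+2}) − f(X_{n+1}) | 𝓕_n ] | < ∞, and hence α_n(f) converges almost surely. -/
open MeasureTheory ProbabilityTheory Filter Topology
open scoped ENNReal NNReal

variable {Ω S : Type*}

/-!
Almost surely `α_n(f)` is the weighted average `A_n` of the numbers `z_i = ∫ f dK_i(X_{i+1}, ·)`,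
which are bounded by any bound `C` of `|f|`. Appending `z_n` moves the average by
`d_n / D_{n+1} · (z_n - A_n)`, hence by at most `2C d_n / D_{n+1}`, a summable bound. So every path
of `A_n` is Cauchy, and by the tower property
`E|E[f(X_{n+2}) - f(X_{n+1}) | 𝓕_n]| = E|E[A_{n+1} - A_n | 𝓕_n]| ≤ E|A_{n+1} - A_n|`.
-/

noncomputable def weightedAvg (d z : ℕ → ℝ) (n : ℕ) : ℝ :=
  (∑ i ∈ Finset.range n, d i * z i) / (∑ i ∈ Finset.range n, d i)

section WeightedAvg

variable {d z : ℕ → ℝ} {C : ℝ}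

theorem abs_weightedAvg_le (hd : ∀ i, 0 ≤ d i) (hz : ∀ i, |z i| ≤ C) (n : ℕ) :
    |weightedAvg d z n| ≤ C := by
  rw [weightedAvg, abs_div, abs_of_nonneg (Finset.sum_nonneg fun i _ => hd i)]
  refine div_le_of_le_mul₀ (Finset.sum_nonneg fun i _ => hd i) ((abs_nonneg _).trans (hz 0)) ?_
  calc |∑ i ∈ Finset.range n, d i * z i|
      ≤ ∑ i ∈ Finset.range n, d i * |z i| :=
        (Finset.abs_sum_le_sum_abs _ _).trans_eq
          (Finset.sum_congr rfl fun i _ => by rw [abs_mul, abs_of_nonneg (hd i)])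
    _ ≤ ∑ i ∈ Finset.range n, d i * C :=
        Finset.sum_le_sum fun i _ => mul_le_mul_of_nonneg_left (hz i) (hd i)
    _ = C * ∑ i ∈ Finset.range n, d i := by rw [← Finset.sum_mul, mul_comm]

theorem weightedAvg_succ_sub (hd : ∀ i, 0 < d i) (n : ℕ) :
    weightedAvg d z (n + 1) - weightedAvg d z n =
      d n / (∑ i ∈ Finset.range (n + 1), d i) * (z n - weightedAvg d z n) := by
  have hD : 0 < ∑ i ∈ Finset.range (n + 1), d i :=
    Finset.sum_pos (fun i _ => hd i) Finset.nonempty_range_add_one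
  have hS : ∑ i ∈ Finset.range n, d i * z i =
      (∑ i ∈ Finset.range n, d i) * weightedAvg d z n := by
    rcases n.eq_zero_or_pos with rfl | hn
    · simp
    · have := Finset.sum_pos (fun i _ => hd i) (Finset.nonempty_range_iff.2 hn.ne')
      rw [weightedAvg, mul_div_cancel₀ _ this.ne']
  rw [weightedAvg, Finset.sum_range_succ, hS]
  rw [Finset.sum_range_succ] at hD ⊢
  field_simp
  ring

theorem abs_weightedAvg_succ_sub_le (hd : ∀ i, 0 < d i) (hz : ∀ i, |z i| ≤ C) (n : ℕ) :
    |weightedAvg d z (n + 1) - weightedAvg d z n| ≤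
      2 * C * (d n / ∑ i ∈ Finset.range (n + 1), d i) := by
  have hq : 0 ≤ d n / ∑ i ∈ Finset.range (n + 1), d i :=
    div_nonneg (hd n).le (Finset.sum_nonneg fun i _ => (hd i).le)
  rw [weightedAvg_succ_sub hd, abs_mul, abs_of_nonneg hq, mul_comm]
  gcongr
  calc |z n - weightedAvg d z n| ≤ |z n| + |weightedAvg d z n| := abs_sub _ _
    _ ≤ C + C := add_le_add (hz n) (abs_weightedAvg_le (fun i => (hd i).le) hz n)
    _ = 2 * C := by ring

theorem exists_tendsto_weightedAvg (hd : ∀ i, 0 < d i) (hz : ∀ i, |z i| ≤ C)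
    (hsum : Summable fun n => d n / ∑ i ∈ Finset.range (n + 1), d i) :
    ∃ L, Tendsto (weightedAvg d z) atTop (𝓝 L) :=
  cauchySeq_tendsto_of_complete <| cauchySeq_of_summable_dist <|
    (hsum.mul_left (2 * C)).of_nonneg_of_le (fun _ => dist_nonneg) fun n => by
      rw [Real.dist_eq, abs_sub_comm]
      exact abs_weightedAvg_succ_sub_le hd hz n

end WeightedAvg

theorem filt_mono [MeasurableSpace S] (X : ℕ → Ω → S) : Monotone (Filt X) := fun _ _ hmn =>
  biSup_mono fun _ hi => Finset.mem_range.2 ((Finset.mem_range.1 hi).trans_le hmn)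

theorem filt_le [MeasurableSpace Ω] [MeasurableSpace S] {X : ℕ → Ω → S}
    (hX : ∀ i, Measurable (X i)) (n : ℕ) : Filt X n ≤ ‹MeasurableSpace Ω› :=
  iSup₂_le fun i _ => (hX i).comap_le

theorem integral_norm_condExp_sub_le {m m' m₀ : MeasurableSpace Ω} {μ : Measure Ω}
    [IsFiniteMeasure μ] (hm : m ≤ m') (hm' : m' ≤ m₀) {g g' a a' : Ω → ℝ}
    (hg : Integrable g μ) (hg' : Integrable g' μ) (ha : μ[g | m] =ᵐ[μ] a)
    (ha' : μ[g' | m'] =ᵐ[μ] a') :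
    ∫ ω, ‖μ[g' - g | m] ω‖ ∂μ ≤ ∫ ω, ‖a' ω - a ω‖ ∂μ := by
  have hai : Integrable a μ := integrable_condExp.congr ha
  have hai' : Integrable a' μ := integrable_condExp.congr ha'
  have hcongr : μ[g' - g | m] =ᵐ[μ] μ[a' - a | m] :=
    calc μ[g' - g | m] =ᵐ[μ] μ[g' | m] - μ[g | m] := condExp_sub hg' hg m
      _ =ᵐ[μ] μ[a' | m] - μ[a | m] :=
        ((condExp_condExp_of_le hm hm').symm.trans (condExp_congr_ae ha')).sub
          ((condExp_condExp_of_le le_rfl (hm.trans hm')).symm.trans (condExp_congr_ae ha))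
      _ =ᵐ[μ] μ[a' - a | m] := (condExp_sub hai' hai m).symm
  simp only [Real.norm_eq_abs]
  calc _ = ∫ ω, |μ[a' - a | m] ω| ∂μ := integral_congr_ae (hcongr.mono fun ω h => by rw [h])
    _ ≤ _ := integral_abs_condExp_le _

theorem stmt14_general [MeasurableSpace Ω]
    [MeasurableSpace S]
    (P : Measure Ω) [IsProbabilityMeasure P]
    (X : ℕ → Ω → S) (hX : ∀ i, Measurable (X i))
    (d : ℕ → ℝ) (hd : ∀ n, 0 < d n)
    (K : ℕ → S → Measure S) (hKp : ∀ n x, IsProbabilityMeasure (K n x))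
    (hrec : ∀ f : S → ℝ, Measurable f → (∃ C, ∀ x, |f x| ≤ C) → ∀ n, 1 ≤ n →
      predMean P X f n =ᵐ[P]
        fun ω => (∑ i ∈ Finset.range n, d i * ∫ x, f x ∂(K i (X i ω))) /
          (∑ i ∈ Finset.range n, d i))
    (hsum : Summable fun n => d n / ∑ i ∈ Finset.range (n + 1), d i) :
    ∀ f : S → ℝ, Measurable f → (∃ C, ∀ x, |f x| ≤ C) →
      (Summable fun n =>
        ∫ ω, ‖(P[(fun ω => f (X (n + 1) ω) - f (X n ω)) | Filt X n]) ω‖ ∂P) ∧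
      ∀ᵐ ω ∂P, ∃ L : ℝ, Tendsto (fun n => predMean P X f n ω) atTop (𝓝 L) := by
  intro f hf ⟨C, hfC⟩
  let A : Ω → ℕ → ℝ := fun ω => weightedAvg d fun i => ∫ x, f x ∂(K i (X i ω))
  have hz : ∀ ω i, |∫ x, f x ∂(K i (X i ω))| ≤ C := fun ω i => by
    simpa using norm_integral_le_of_norm_le_const (μ := K i (X i ω)) 
      (ae_of_all _ fun x => (Real.norm_eq_abs _).trans_le (hfC x))
  have hα : ∀ n, predMean P X f (n + 1) =ᵐ[P] fun ω => A ω (n + 1) :=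
    fun n => hrec f hf ⟨C, hfC⟩ (n + 1) n.succ_pos
  have hfX : ∀ n, Integrable (fun ω => f (X n ω)) P := fun n =>
    .of_bound (hf.comp (hX n)).aestronglyMeasurable C (ae_of_all _ fun ω => hfC (X n ω))
  refine ⟨(summable_nat_add_iff 1).1 <|
    (((summable_nat_add_iff 1).2 hsum).mul_left (2 * C)).of_nonneg_of_le
      (fun n => integral_nonneg fun ω => norm_nonneg _) fun n => ?_, ?_⟩
  · calc _ ≤ ∫ ω, ‖A ω (n + 1 + 1) - A ω (n + 1)‖ ∂P :=
          integral_norm_condExp_sub_le (filt_mono X n.succ.le_succ) (filt_le hX _)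
            (hfX _) (hfX _) (hα n) (hα (n + 1))
      _ ≤ ∫ _, 2 * C * (d (n + 1) / ∑ i ∈ Finset.range (n + 1 + 1), d i) ∂P :=
          integral_mono_of_nonneg (ae_of_all _ fun _ => norm_nonneg _) (integrable_const _)
            (ae_of_all _ fun ω => abs_weightedAvg_succ_sub_le hd (hz ω) (n + 1))
      _ = _ := by simp
  · filter_upwards [ae_all_iff.2 hα] with ω hω
    obtain ⟨L, hL⟩ := exists_tendsto_weightedAvg hd (hz ω) hsum
    exact ⟨L, (tendsto_add_atTop_iff_nat 1).1 <|
      ((tendsto_add_atTop_iff_nat 1).2 hL).congr fun n => (hω n).symm⟩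

/-- convex combinations of kernels: if
`α_n = (1/D_n) ∑_{i<n} d_i K_i(X_{i+1},·)` with `d_i > 0`, `D_n = ∑_{i<n} d_i`, `K_i` kernels,
and `∑_n d_n/(d_0 + ⋯ + d_n) < ∞`, then each `(α_n(f))` is a quasi-martingale and hence
`α_n(f)` converges a.s. for each bounded Borel `f`. -/
theorem stmt14 [MeasurableSpace Ω]
    [TopologicalSpace S] [PolishSpace S] [MeasurableSpace S] [BorelSpace S]
    (P : Measure Ω) [IsProbabilityMeasure P]
    (X : ℕ → Ω → S) (hX : ∀ i, Measurable (X i))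
    (d : ℕ → ℝ) (hd : ∀ n, 0 < d n)
    (K : ℕ → S → Measure S) (hKp : ∀ n x, IsProbabilityMeasure (K n x))
    (hKmeas : ∀ n (B : Set S), MeasurableSet B → Measurable fun x => K n x B)
    (hrec : ∀ f : S → ℝ, Measurable f → (∃ C, ∀ x, |f x| ≤ C) → ∀ n, 1 ≤ n →
      predMean P X f n =ᵐ[P]
        fun ω => (∑ i ∈ Finset.range n, d i * ∫ x, f x ∂(K i (X i ω))) /
          (∑ i ∈ Finset.range n, d i))
    (hsum : Summable fun n => d n / ∑ i ∈ Finset.range (n + 1), d i) :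
    ∀ f : S → ℝ, Measurable f → (∃ C, ∀ x, |f x| ≤ C) →
      (Summable fun n =>
        ∫ ω, ‖(P[(fun ω => f (X (n + 1) ω) - f (X n ω)) | Filt X n]) ω‖ ∂P) ∧
      ∀ᵐ ω ∂P, ∃ L : ℝ, Tendsto (fun n => predMean P X f n ω) atTop (𝓝 L) :=
  stmt14_general P X hX d hd K hKp hrec hsum
end
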